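/- A dcpo L is hypercontinuous if and only if L is strongly continuous and the upper topology equals the strong Scott topology: υ(L) = σ_s(L). -/

import Mathlib

open Set

variable {L : Type*}

/-- A directed subset: nonempty and directed under `≤`. -/
def DirSet [Preorder L] (D : Set L) : Prop := D.Nonempty ∧ DirectedOn (· ≤ ·) D

/-- Strongly Scott open sets (the family `σ^s(L)`). -/
def StronglyScottOpen [Preorder L] [SupSet L] (U : Set L) : Prop :=
  IsUpperSet U ∧ ∀ D : Set L, DirSet D → ∀ x : L,
    Ici (sSup D) ∩ Ici x ⊆ U → ∃ d ∈ D, Ici d ∩ Ici x ⊆ U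

/-- The strong Scott topology `σ_s(L)`, generated by the strongly Scott open sets. -/
def strongScott (L : Type*) [Preorder L] [SupSet L] : TopologicalSpace L :=
  TopologicalSpace.generateFrom {U | StronglyScottOpen U}

/-- Scott open sets. -/
def ScottOpen [Preorder L] [SupSet L] (U : Set L) : Prop :=
  IsUpperSet U ∧ ∀ D : Set L, DirSet D → sSup D ∈ U → (D ∩ U).Nonempty

/-- The Scott topology `σ(L)`. -/
def scottTop (L : Type*) [Preorder L] [SupSet L] : TopologicalSpace L :=
  TopologicalSpace.generateFrom {U | ScottOpen U}

/-- The upper topology `υ(L)`. -/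
def upperTop (L : Type*) [Preorder L] : TopologicalSpace L :=
  TopologicalSpace.generateFrom {U | ∃ x : L, U = (Iic x)ᶜ}

/-- The lower topology `ω(L)`. -/
def lowerTop (L : Type*) [Preorder L] : TopologicalSpace L :=
  TopologicalSpace.generateFrom {U | ∃ x : L, U = (Ici x)ᶜ}

/-- The strong way-below relation `x ≪_s y`. -/
def SWayBelow [Preorder L] (x y : L) : Prop :=
  ∀ D : Set L, DirSet D → ∀ a : L,
    (⋂ d ∈ D, Ici d) ∩ Ici a ⊆ Ici y → ∃ d ∈ D, Ici d ∩ Ici a ⊆ Ici x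

/-- The way-below relation `x ≪ y`. -/
def WayBelow [Preorder L] [SupSet L] (x y : L) : Prop :=
  ∀ D : Set L, DirSet D → y ≤ sSup D → ∃ d ∈ D, x ≤ d

/-- `X` with topology `t` is a C-space (w.r.t. the order of `L`). -/
def IsCSpace [Preorder L] (t : TopologicalSpace L) : Prop :=
  ∀ U : Set L, @IsOpen _ (t) U → ∀ x ∈ U, ∃ y ∈ U,
    x ∈ @interior L t (Ici y) ∧ Ici y ⊆ U

/-- `L` is a strongly continuous domain. -/
def StronglyContinuousDomain (L : Type*) [Preorder L] [SupSet L] : Prop :=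
  IsCSpace (strongScott L)

/-- `L` is a continuous domain. -/
def ContinuousDomain (L : Type*) [Preorder L] [SupSet L] : Prop :=
  ∀ x : L, DirSet {y | WayBelow y x} ∧ IsLUB {y | WayBelow y x} x

/-- `L` is a hypercontinuous domain. -/
def HypercontinuousDomain (L : Type*) [Preorder L] : Prop :=
  ∀ x : L, DirSet {y | x ∈ @interior L (upperTop L) (Ici y)} ∧
    IsLUB {y | x ∈ @interior L (upperTop L) (Ici y)} x

/-- The strong Lawson topology `λ_s(L)`: common refinement of `σ_s(L)` and `ω(L)`. -/
def strongLawson (L : Type*) [Preorder L] [SupSet L] : TopologicalSpace L :=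
  TopologicalSpace.generateFrom
    {U | @IsOpen _ (strongScott L) U ∨ @IsOpen _ (lowerTop L) U}

/-!
Complements of principal ideals are strongly Scott open and strongly Scott open sets are Scott
open, so `σ ≤ σ_s ≤ υ` as topologies (finer is smaller). In a hypercontinuous dcpo each `x` is
the directed supremum of the `y` with `x ∈ int_υ ↑y`, so a Scott open set containing `x` contains
such a `y` together with `↑y`: Scott open sets are `υ`-open, the three topologies coincide, and
`υ` is a C-space. Conversely, in a C-space refining `υ` the `y` with `x ∈ int ↑y` are directed,
and the open set `(↓z)ᶜ` forces one of them outside `↓z` whenever `x ≰ z`.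
-/

open Topology

section Preorder

variable [Preorder L]

lemma IsCSpace.dirSet_isLUB_interior_Ici {t : TopologicalSpace L} (ht : IsCSpace t)
    (hle : t ≤ upperTop L) (x : L) :
    DirSet {y | x ∈ @interior L t (Ici y)} ∧ IsLUB {y | x ∈ @interior L t (Ici y)} x := by
  have isOpen_compl_Iic (z : L) : IsOpen[t] (Iic z)ᶜ :=
    hle _ (TopologicalSpace.GenerateOpen.basic _ ⟨z, rfl⟩)
  refine ⟨⟨?_, ?_⟩, fun y hy => interior_subset hy, fun z hz => ?_⟩
  · obtain ⟨y, -, hy, -⟩ := ht univ isOpen_univ x (mem_univ x)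
    exact ⟨y, hy⟩
  · intro y₁ hy₁ y₂ hy₂
    obtain ⟨y, hy, hxy, -⟩ := ht _ (isOpen_interior.inter isOpen_interior) x ⟨hy₁, hy₂⟩
    exact ⟨y, hxy, interior_subset hy.1, interior_subset hy.2⟩
  · by_contra hxz
    obtain ⟨y, hyz, hxy, -⟩ := ht _ (isOpen_compl_Iic z) x hxz
    exact hyz (hz hxy)

variable [SupSet L]

lemma scottOpen_univ : ScottOpen (univ : Set L) :=
  ⟨isUpperSet_univ, fun _ hD _ => by simpa using hD.1⟩

lemma ScottOpen.inter {U V : Set L} (hU : ScottOpen U) (hV : ScottOpen V) :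
    ScottOpen (U ∩ V) := by
  refine ⟨hU.1.inter hV.1, fun D hD hs => ?_⟩
  obtain ⟨a, haD, haU⟩ := hU.2 D hD hs.1
  obtain ⟨b, hbD, hbV⟩ := hV.2 D hD hs.2
  obtain ⟨c, hcD, hac, hbc⟩ := hD.2 a haD b hbD
  exact ⟨c, hcD, hU.1 hac haU, hV.1 hbc hbV⟩

lemma ScottOpen.sUnion {S : Set (Set L)} (hS : ∀ U ∈ S, ScottOpen U) : ScottOpen (⋃₀ S) := by
  refine ⟨isUpperSet_sUnion fun U hU => (hS U hU).1, fun D hD ⟨U, hUS, hsU⟩ => ?_⟩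
  obtain ⟨d, hdD, hdU⟩ := (hS U hUS).2 D hD hsU
  exact ⟨d, hdD, U, hUS, hdU⟩

lemma isOpen_scottTop_iff {U : Set L} : IsOpen[scottTop L] U ↔ ScottOpen U := by
  refine ⟨fun hU => ?_, fun hU => .basic U hU⟩
  induction hU with
  | basic U hU => exact hU
  | univ => exact scottOpen_univ
  | inter U V _ _ hU hV => exact hU.inter hV
  | sUnion S _ hS => exact ScottOpen.sUnion hS

lemma StronglyScottOpen.scottOpen {U : Set L} (hU : StronglyScottOpen U) : ScottOpen U := by
  refine ⟨hU.1, fun D hD hs => ?_⟩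
  obtain ⟨a, ha⟩ := hD.1
  obtain ⟨d, hdD, hd⟩ := hU.2 D hD a fun w hw => hU.1 hw.1 hs
  obtain ⟨e, heD, hde, hae⟩ := hD.2 d hdD a ha
  exact ⟨e, heD, hd ⟨hde, hae⟩⟩

lemma scottTop_le_strongScott : scottTop L ≤ strongScott L :=
  le_generateFrom fun _ hU => TopologicalSpace.GenerateOpen.basic _ hU.scottOpen

end Preorder

section CompletePartialOrder

variable [CompletePartialOrder L]

lemma stronglyScottOpen_compl_Iic (z : L) : StronglyScottOpen (Iic z)ᶜ := by
  refine ⟨fun a b hab ha hb => ha (hab.trans hb), fun D hD x h => ?_⟩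
  by_contra! hD_le
  have hle_z : ∀ d ∈ D, d ≤ z ∧ x ≤ z := fun d hd => by
    obtain ⟨w, hw, hwz⟩ := not_subset.mp (hD_le d hd)
    exact ⟨hw.1.trans (not_not.mp hwz), hw.2.trans (not_not.mp hwz)⟩
  obtain ⟨a, ha⟩ := hD.1
  have hsup : sSup D ≤ z :=
    (CompletePartialOrder.lubOfDirected D hD.2).2 fun d hd => (hle_z d hd).1
  exact h ⟨hsup, (hle_z a ha).2⟩ le_rfl

lemma strongScott_le_upperTop : strongScott L ≤ upperTop L :=
  le_generateFrom fun _ ⟨z, hz⟩ =>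
    hz ▸ TopologicalSpace.GenerateOpen.basic _ (stronglyScottOpen_compl_Iic z)

lemma scottTop_le_upperTop : scottTop L ≤ upperTop L :=
  scottTop_le_strongScott.trans strongScott_le_upperTop

namespace HypercontinuousDomain

lemma exists_mem_interior_Ici_subset (hL : HypercontinuousDomain L) {U : Set L}
    (hU : ScottOpen U) {x : L} (hx : x ∈ U) :
    ∃ y ∈ U, x ∈ @interior L (upperTop L) (Ici y) ∧ Ici y ⊆ U := by
  obtain ⟨hdir, hlub⟩ := hL x
  have hsup : sSup {y | x ∈ @interior L (upperTop L) (Ici y)} = x :=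
    (CompletePartialOrder.lubOfDirected _ hdir.2).unique hlub
  obtain ⟨y, hxy, hyU⟩ := hU.2 _ hdir (by rwa [hsup])
  exact ⟨y, hyU, hxy, fun w hw => hU.1 hw hyU⟩

lemma upperTop_le_scottTop (hL : HypercontinuousDomain L) : upperTop L ≤ scottTop L :=
  le_generateFrom fun U hU => by
    let := upperTop L
    refine isOpen_iff_mem_nhds.2 fun x hx => ?_
    obtain ⟨y, -, hxy, hyU⟩ := hL.exists_mem_interior_Ici_subset hU hx
    exact Filter.mem_of_superset (mem_interior_iff_mem_nhds.1 hxy) hyU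

lemma isCSpace_upperTop (hL : HypercontinuousDomain L) : IsCSpace (upperTop L) :=
  fun U hU _ hx =>
    hL.exists_mem_interior_Ici_subset (isOpen_scottTop_iff.1 (scottTop_le_upperTop U hU)) hx

end HypercontinuousDomain

end CompletePartialOrder

theorem hypercontinuous_iff_stronglyContinuous_and_upper_eq_strongScott
    [CompletePartialOrder L] :
    HypercontinuousDomain L ↔
      StronglyContinuousDomain L ∧ upperTop L = strongScott L := by
  constructor
  · intro hL
    have heq : upperTop L = strongScott L :=
      le_antisymm (hL.upperTop_le_scottTop.trans scottTop_le_strongScott) strongScott_le_upperTop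
    exact ⟨show IsCSpace (strongScott L) from heq ▸ hL.isCSpace_upperTop, heq⟩
  · rintro ⟨hSC, heq⟩ x
    rw [heq]
    exact hSC.dirSet_isLUB_interior_Ici strongScott_le_upperTop x
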